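/- The 6-vertex graph obtained from K_{2,3} by subdividing one edge once (equivalently, the graph consisting of two vertices joined by three internally disjoint paths of lengths 2, 2 and 3) is minimally unlabellable: it is not labellable, but every proper induced subgraph of it is labellable. -/

import Mathlib

/-- `H` is labellable: for some positive integer `k` the vertices of `H` can be
injectively labelled by `k`-element subsets of `ℕ` so that two distinct vertices
are adjacent if and only if their labels intersect in a set of size `k - 1`. -/
def Labellable {V : Type*} (H : SimpleGraph V) : Prop :=
  ∃ k : ℕ, 0 < k ∧ ∃ ℓ : V → Finset ℕ, Function.Injective ℓ ∧
    (∀ v, (ℓ v).card = k) ∧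
    ∀ u v : V, u ≠ v → (H.Adj u v ↔ (ℓ u ∩ ℓ v).card = k - 1)

/-- The 6-vertex graph obtained from `K_{2,3}` by subdividing one edge once:
the vertices `0` and `1` are joined by three internally disjoint paths,
`0-2-1`, `0-3-1` (lengths 2), and `0-4-5-1` (length 3). -/
def subdividedK23 : SimpleGraph (Fin 6) :=
  SimpleGraph.fromRel (fun a b =>
    (a.val, b.val) ∈ [(0, 2), (2, 1), (0, 3), (3, 1), (0, 4), (4, 5), (5, 1)])

/-!
Let `ℓ` label a graph by `k`-sets. If `a, b` are non-adjacent and `c` is a common neighbour,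
counting inside `ℓ c` forces `|ℓ a ∩ ℓ b| = k - 2` and `ℓ a ∩ ℓ b ⊆ ℓ c ⊆ ℓ a ∪ ℓ b`. For an
induced 4-cycle `a c b c'` this gives `ℓ a ∩ ℓ b ⊆ ℓ c ∩ ℓ c'` and, counting once more,
`ℓ a ∪ ℓ b ⊆ ℓ c ∪ ℓ c'`, so every set meets `ℓ a` and `ℓ b` together at most as often as `ℓ c`
and `ℓ c'`. In `subdividedK23`, `0 2 1 3` is such a cycle, and the label of `4` meets those of
`0, 1` in `(k - 1) + (k - 2)` elements but those of `2, 3` in at most `2 (k - 2)`. Each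
vertex-deleted subgraph has an explicit labelling by `3`-sets, which restricts to every smaller
induced subgraph.
-/

open Finset

instance : DecidableRel subdividedK23.Adj := fun a b =>
  decidable_of_iff' _ (SimpleGraph.fromRel_adj _ a b)

namespace Finset

variable {α : Type*} [DecidableEq α]

theorem card_inter_lt_of_ne {s t : Finset α} (hst : s ≠ t) (hcard : #s = #t) :
    #(s ∩ t) < #s := by
  by_contra! h
  have hs : s ⊆ t := inter_eq_left.1 (eq_of_subset_of_card_le inter_subset_left h)
  exact hst (eq_of_subset_of_card_le hs hcard.ge)

theorem card_inter_add_card_inter (u s t : Finset α) :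
    #(u ∩ s) + #(u ∩ t) = #(u ∩ (s ∪ t)) + #(u ∩ (s ∩ t)) := by
  rw [← card_union_add_card_inter, ← inter_union_distrib_left, ← inter_inter_distrib_left]

theorem card_inter_add_card_inter_le_of_subset {s t s' t' : Finset α} (u : Finset α)
    (hunion : s ∪ t ⊆ s' ∪ t') (hinter : s ∩ t ⊆ s' ∩ t') :
    #(u ∩ s) + #(u ∩ t) ≤ #(u ∩ s') + #(u ∩ t') := by
  rw [card_inter_add_card_inter u s t, card_inter_add_card_inter u s' t']
  exact add_le_add (card_le_card (inter_subset_inter_left hunion))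
    (card_le_card (inter_subset_inter_left hinter))

end Finset

structure IsLabelling {V : Type*} (H : SimpleGraph V) (k : ℕ) (ℓ : V → Finset ℕ) : Prop where
  injective : Function.Injective ℓ
  card_eq : ∀ v, #(ℓ v) = k
  adj_iff : ∀ u v, u ≠ v → (H.Adj u v ↔ #(ℓ u ∩ ℓ v) = k - 1)

namespace IsLabelling

variable {V : Type*} {H : SimpleGraph V} {k : ℕ} {ℓ : V → Finset ℕ} {u v a b c c' : V}

theorem card_inter_lt (hℓ : IsLabelling H k ℓ) (huv : u ≠ v) : #(ℓ u ∩ ℓ v) < k :=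
  hℓ.card_eq u ▸ card_inter_lt_of_ne (hℓ.injective.ne huv) ((hℓ.card_eq u).trans (hℓ.card_eq v).symm)

theorem card_inter_add_one_of_adj (hℓ : IsLabelling H k ℓ) (h : H.Adj u v) :
    #(ℓ u ∩ ℓ v) + 1 = k := by
  have := hℓ.card_inter_lt h.ne
  have := (hℓ.adj_iff u v h.ne).1 h
  omega

theorem card_inter_add_two_le_of_not_adj (hℓ : IsLabelling H k ℓ) (huv : u ≠ v)
    (h : ¬ H.Adj u v) : #(ℓ u ∩ ℓ v) + 2 ≤ k := by
  have := hℓ.card_inter_lt huv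
  have := mt (hℓ.adj_iff u v huv).2 h
  omega

theorem common_neighbor (hℓ : IsLabelling H k ℓ) (hab : a ≠ b) (hnab : ¬ H.Adj a b)
    (hac : H.Adj a c) (hbc : H.Adj b c) :
    #(ℓ a ∩ ℓ b) + 2 = k ∧ ℓ a ∩ ℓ b ⊆ ℓ c ∧ ℓ c ⊆ ℓ a ∪ ℓ b := by
  -- `k ≥ |ℓ c ∩ (ℓ a ∪ ℓ b)| = |ℓ c ∩ ℓ a| + |ℓ c ∩ ℓ b| - |ℓ c ∩ ℓ a ∩ ℓ b| ≥ 2 (k - 1) - (k - 2)`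
  have hmod := card_inter_add_card_inter (ℓ c) (ℓ a) (ℓ b)
  have hca := hℓ.card_inter_add_one_of_adj hac.symm
  have hcb := hℓ.card_inter_add_one_of_adj hbc.symm
  have hab' := hℓ.card_inter_add_two_le_of_not_adj hab hnab
  have hunion : #(ℓ c ∩ (ℓ a ∪ ℓ b)) ≤ #(ℓ c) := card_le_card inter_subset_left
  have hinter : #(ℓ c ∩ (ℓ a ∩ ℓ b)) ≤ #(ℓ a ∩ ℓ b) := card_le_card inter_subset_right
  rw [hℓ.card_eq] at hunion
  refine ⟨by omega, ?_, ?_⟩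
  · exact inter_eq_right.1 (eq_of_subset_of_card_le inter_subset_right (by omega))
  · refine inter_eq_left.1 (eq_of_subset_of_card_le inter_subset_left ?_)
    rw [hℓ.card_eq]
    omega

theorem card_inter_add_card_inter_le_of_induced_cycle (hℓ : IsLabelling H k ℓ)
    (hab : a ≠ b) (hnab : ¬ H.Adj a b) (hcc' : c ≠ c') (hncc' : ¬ H.Adj c c')
    (hac : H.Adj a c) (hbc : H.Adj b c) (hac' : H.Adj a c') (hbc' : H.Adj b c')
    (s : Finset ℕ) : #(s ∩ ℓ a) + #(s ∩ ℓ b) ≤ #(s ∩ ℓ c) + #(s ∩ ℓ c') := by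
  obtain ⟨hab2, hc_inter, hc_union⟩ := hℓ.common_neighbor hab hnab hac hbc
  obtain ⟨-, hc'_inter, hc'_union⟩ := hℓ.common_neighbor hab hnab hac' hbc'
  have hunion : ℓ c ∪ ℓ c' = ℓ a ∪ ℓ b := by
    refine eq_of_subset_of_card_le (union_subset hc_union hc'_union) ?_
    have hab_mod := card_union_add_card_inter (ℓ a) (ℓ b)
    have hcc'_mod := card_union_add_card_inter (ℓ c) (ℓ c')
    have hcc'2 := hℓ.card_inter_add_two_le_of_not_adj hcc' hncc'
    simp only [hℓ.card_eq] at hab_mod hcc'_mod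
    omega
  exact card_inter_add_card_inter_le_of_subset s hunion.ge (subset_inter hc_inter hc'_inter)

end IsLabelling

theorem not_labellable_subdividedK23 : ¬ Labellable subdividedK23 := by
  rintro ⟨k, -, ℓ, hinj, hcard, hadj⟩
  have hℓ : IsLabelling subdividedK23 k ℓ := ⟨hinj, hcard, hadj⟩
  have hcycle := hℓ.card_inter_add_card_inter_le_of_induced_cycle (a := 0) (b := 1) (c := 2)
    (c' := 3) (by decide) (by decide) (by decide) (by decide) (by decide) (by decide) (by decide)
    (by decide) (ℓ 4)
  have h40 := hℓ.card_inter_add_one_of_adj (u := 4) (v := 0) (by decide)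
  have h41 := (hℓ.common_neighbor (a := 4) (b := 1) (c := 5) (by decide) (by decide) (by decide)
    (by decide)).1
  have h42 := hℓ.card_inter_add_two_le_of_not_adj (u := 4) (v := 2) (by decide) (by decide)
  have h43 := hℓ.card_inter_add_two_le_of_not_adj (u := 4) (v := 3) (by decide) (by decide)
  omega

theorem labellable_induce_of_labels {V : Type*} {H : SimpleGraph V} (s : Set V) {k : ℕ}
    (hk : 0 < k) (ℓ : V → Finset ℕ) (hinj : s.InjOn ℓ) (hcard : ∀ v ∈ s, #(ℓ v) = k)
    (hadj : ∀ u ∈ s, ∀ v ∈ s, u ≠ v → (H.Adj u v ↔ #(ℓ u ∩ ℓ v) = k - 1)) :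
    Labellable (H.induce s) :=
  ⟨k, hk, fun v => ℓ v, fun u v h => Subtype.ext (hinj u.2 v.2 h), fun v => hcard v v.2,
    fun u v huv => hadj u u.2 v v.2 (Subtype.coe_ne_coe.2 huv)⟩

/-- `deletionLabel i` labels `subdividedK23` with vertex `i` deleted; the value at `i` is junk. -/
def deletionLabel : Fin 6 → Fin 6 → Finset ℕ :=
  ![![∅, {0, 1, 2}, {0, 1, 3}, {0, 2, 4}, {1, 4, 5}, {1, 2, 5}],
    ![{0, 1, 2}, ∅, {0, 1, 3}, {0, 2, 4}, {1, 2, 5}, {1, 4, 5}],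
    ![{0, 1, 2}, {0, 3, 4}, ∅, {0, 1, 3}, {0, 2, 5}, {0, 4, 5}],
    ![{0, 1, 2}, {0, 3, 4}, {0, 1, 3}, ∅, {0, 2, 5}, {0, 4, 5}],
    ![{0, 1, 2}, {0, 3, 4}, {0, 1, 3}, {0, 2, 4}, ∅, {3, 4, 5}],
    ![{0, 1, 2}, {0, 3, 4}, {0, 1, 3}, {0, 2, 4}, {1, 2, 5}, ∅]]

theorem deletionLabel_card : ∀ i v : Fin 6, v ≠ i → #(deletionLabel i v) = 3 := by decide

theorem deletionLabel_injective : ∀ i u v : Fin 6, u ≠ i → v ≠ i →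
    deletionLabel i u = deletionLabel i v → u = v := by decide

theorem deletionLabel_adj_iff : ∀ i u v : Fin 6, u ≠ i → v ≠ i → u ≠ v →
    (subdividedK23.Adj u v ↔ #(deletionLabel i u ∩ deletionLabel i v) = 2) := by decide

theorem labellable_induce_subdividedK23 {s : Set (Fin 6)} (hs : s ≠ Set.univ) :
    Labellable (subdividedK23.induce s) := by
  obtain ⟨i, hi⟩ := (Set.ne_univ_iff_exists_notMem s).1 hs
  have hne : ∀ v ∈ s, v ≠ i := fun v hv h => hi (h ▸ hv)
  exact labellable_induce_of_labels s three_pos (deletionLabel i)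
    (fun u hu v hv => deletionLabel_injective i u v (hne u hu) (hne v hv))
    (fun v hv => deletionLabel_card i v (hne v hv))
    (fun u hu v hv => deletionLabel_adj_iff i u v (hne u hu) (hne v hv))

/-- The 6-vertex graph obtained from `K_{2,3}` by subdividing one edge once is
minimally unlabellable: it is not labellable, but every proper induced subgraph
of it is labellable. -/
theorem subdividedK23_minimally_unlabellable :
    ¬ Labellable subdividedK23 ∧
      ∀ s : Set (Fin 6), s ≠ Set.univ → Labellable (subdividedK23.induce s) :=
  ⟨not_labellable_subdividedK23, fun _ hs => labellable_induce_subdividedK23 hs⟩
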